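/- arXiv:2204.09815 — 2 statements merged into one kernel-verified Lean document; each statement's English description precedes it below -/
import Mathlib

section
/- Fix μ > 0. The parametrization of single anisotropic basis functions is injective on positive weights: if α, α' > 0, β, β', γ, γ' ∈ ℝ and φ_{α,β,γ}(v) = φ_{α',β',γ'}(v) for every v ∈ ℝ², then α = α', β = β', and γ = γ'. -/
/-- The 2×2 stretch-and-slide matrix `R(β,γ) = μ·!![exp β, γ; 0, exp(−β)]`. -/
noncomputable def Rmat (μ β γ : ℝ) : Matrix (Fin 2) (Fin 2) ℝ :=
  μ • !![Real.exp β, γ; 0, Real.exp (-β)]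

/-- The single anisotropic basis function level-set function
`φ_{α,β,γ}(v) = tanh(α/2)·exp(−‖R(β,γ)·v‖²)` on `ℝ²` (Euclidean norm). -/
noncomputable def phiAbf (μ α β γ : ℝ) (v : EuclideanSpace ℝ (Fin 2)) : ℝ :=
  Real.tanh (α / 2) *
    Real.exp (-‖(WithLp.equiv 2 (Fin 2 → ℝ)).symm
      ((Rmat μ β γ).mulVec ((WithLp.equiv 2 (Fin 2 → ℝ)) v))‖ ^ 2)

/-- The `c`-level set `Γ(α,β,γ) = {v ∈ ℝ² : φ_{α,β,γ}(v) = c}`. -/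
noncomputable def GammaAbf (μ c α β γ : ℝ) : Set (EuclideanSpace ℝ (Fin 2)) :=
  {v | phiAbf μ α β γ v = c}

/-!
Evaluating at `v = 0` gives `tanh (α/2) = tanh (α'/2)`, hence `α = α'`. As `tanh (α/2) ≠ 0`,
equality of the functions then means equality of the quadratic forms `v ↦ ‖R(β,γ) v‖²`, and
their values at `e₁`, `e₂`, `e₁ + e₂` determine `exp (2β)` and `γ exp β`.
-/

open Real

noncomputable def abfQuadForm (β γ a b : ℝ) : ℝ :=
  (exp β * a + γ * b) ^ 2 + (exp (-β) * b) ^ 2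

lemma abfQuadForm_inj {β β' γ γ' : ℝ} :
    abfQuadForm β γ = abfQuadForm β' γ' ↔ β = β' ∧ γ = γ' := by
  refine ⟨fun h => ?_, fun ⟨hβ, hγ⟩ => hβ ▸ hγ ▸ rfl⟩
  have hQ : ∀ a b, abfQuadForm β γ a b = abfQuadForm β' γ' a b := fun a b => congrFun₂ h a b
  simp only [abfQuadForm] at hQ
  have hβ : β = β' := by
    have h10 := hQ 1 0
    simp only [mul_one, mul_zero, add_zero, zero_pow two_ne_zero] at h10
    exact exp_injective ((pow_left_inj₀ (exp_pos β).le (exp_pos β').le two_ne_zero).mp h10)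
  subst hβ
  have hγ : 2 * exp β * γ = 2 * exp β * γ' := by
    linear_combination hQ 1 1 - hQ 0 1
  exact ⟨rfl, mul_left_cancel₀ (by positivity) hγ⟩

lemma Rmat_mulVec (μ β γ a b : ℝ) :
    (Rmat μ β γ).mulVec ![a, b] = ![μ * (exp β * a + γ * b), μ * (exp (-β) * b)] := by
  ext i
  fin_cases i <;> simp [Rmat] <;> ring

lemma phiAbf_toLp (μ α β γ a b : ℝ) :
    phiAbf μ α β γ ((WithLp.equiv 2 (Fin 2 → ℝ)).symm ![a, b]) =
      tanh (α / 2) * exp (-(μ ^ 2 * abfQuadForm β γ a b)) := by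
  rw [phiAbf, Equiv.apply_symm_apply, EuclideanSpace.norm_sq_eq, Fin.sum_univ_two, Rmat_mulVec]
  simp only [WithLp.equiv_symm_apply, PiLp.toLp_apply, Matrix.cons_val_zero, Matrix.cons_val_one,
    Matrix.cons_val_fin_one, Real.norm_eq_abs, sq_abs, abfQuadForm]
  congr 3
  ring

lemma phiAbf_zero (μ α β γ : ℝ) : phiAbf μ α β γ 0 = tanh (α / 2) := by
  simp [phiAbf]

lemma Real.tanh_ne_zero {x : ℝ} (hx : x ≠ 0) : tanh x ≠ 0 :=
  tanh_zero ▸ tanh_injective.ne hx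

theorem phiAbf_injective_general (μ : ℝ) (hμ : 0 < μ) (α α' β β' γ γ' : ℝ)
    (hα : 0 < α)
    (h : ∀ v : EuclideanSpace ℝ (Fin 2), phiAbf μ α β γ v = phiAbf μ α' β' γ' v) :
    α = α' ∧ β = β' ∧ γ = γ' := by
  have hα_eq : α = α' := by
    have := tanh_injective (by simpa only [phiAbf_zero] using h 0)
    linarith
  subst hα_eq
  have hQ : ∀ a b, abfQuadForm β γ a b = abfQuadForm β' γ' a b := by
    intro a b
    have hab := h ((WithLp.equiv 2 (Fin 2 → ℝ)).symm ![a, b])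
    rw [phiAbf_toLp, phiAbf_toLp] at hab
    have hexp := exp_injective (mul_left_cancel₀ (tanh_ne_zero (by positivity)) hab)
    exact mul_left_cancel₀ (pow_ne_zero 2 hμ.ne') (neg_inj.mp hexp)
  exact ⟨rfl, abfQuadForm_inj.mp (funext₂ hQ)⟩

/-- For fixed `μ > 0`, the parametrization of single anisotropic basis functions is
injective on positive weights: equal functions force equal parameters. -/
theorem phiAbf_injective (μ : ℝ) (hμ : 0 < μ) (α α' β β' γ γ' : ℝ)
    (hα : 0 < α) (hα' : 0 < α')
    (h : ∀ v : EuclideanSpace ℝ (Fin 2), phiAbf μ α β γ v = phiAbf μ α' β' γ' v) :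
    α = α' ∧ β = β' ∧ γ = γ' :=
  phiAbf_injective_general μ hμ α α' β β' γ γ' hα h
end

section
/- Fix μ > 0 and c ∈ (0,1). For every real symmetric positive definite 2×2 matrix A with det A = 1 and every k with 0 < k < (1/μ²)·ln(1/c), there exist α > 0 and β, γ ∈ ℝ such that the c-level set of the single anisotropic basis function equals the ellipse {v ∈ ℝ² : vᵀ·A·v = k}; that is, Γ(α,β,γ) = {v ∈ ℝ² : vᵀ·A·v = k}. -/
open Matrix

/-- Auxiliary algebraic identity. -/
lemma aux_tanh_ratio (s T : ℝ) (hs : 0 < s) (key : s ^ 2 * (1 - T) = 1 + T) :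
    (s - s⁻¹) / 2 / ((s + s⁻¹) / 2) = T := by
  have hsne : s ≠ 0 := ne_of_gt hs
  have hden : 0 < s + s⁻¹ := by positivity
  have h1 : (s - s⁻¹) / 2 / ((s + s⁻¹) / 2) = (s ^ 2 - 1) / (s ^ 2 + 1) := by
    rw [div_div_div_eq]
    field_simp
  rw [h1, div_eq_iff (by positivity)]
  nlinarith [key]

/-- tanh of half the log of `(1+T)/(1-T)` recovers `T`. -/
lemma tanh_half_log_ratio {T : ℝ} (hT0 : 0 < T) (hT1 : T < 1) :
    Real.tanh (Real.log ((1 + T) / (1 - T)) / 2) = T := by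
  have h1T : 0 < 1 - T := by linarith
  have hr : 0 < (1 + T) / (1 - T) := by positivity
  have hs2 : Real.exp (Real.log ((1 + T) / (1 - T)) / 2) ^ 2 = (1 + T) / (1 - T) := by
    rw [sq, ← Real.exp_add, add_halves, Real.exp_log hr]
  have key : Real.exp (Real.log ((1 + T) / (1 - T)) / 2) ^ 2 * (1 - T) = 1 + T := by
    rw [hs2]; field_simp
  rw [Real.tanh_eq_sinh_div_cosh, Real.sinh_eq, Real.cosh_eq, Real.exp_neg]
  exact aux_tanh_ratio _ T (Real.exp_pos _) key

/-- For `μ > 0`, `c ∈ (0,1)`, every real SPD 2×2 matrix `A` with `det A = 1`, and every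
`k` with `0 < k < (1/μ²)·ln(1/c)`, some single anisotropic basis function has the ellipse
`{v : vᵀAv = k}` as its `c`-level set. -/
theorem gammaAbf_realizes_ellipse (μ c : ℝ) (hμ : 0 < μ) (hc0 : 0 < c) (hc1 : c < 1)
    (A : Matrix (Fin 2) (Fin 2) ℝ) (hsymm : Aᵀ = A)
    (hpos : ∀ v : Fin 2 → ℝ, v ≠ 0 → 0 < v ⬝ᵥ A.mulVec v)
    (hdet : A.det = 1)
    (k : ℝ) (hk0 : 0 < k) (hk1 : k < (1 / μ ^ 2) * Real.log (1 / c)) :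
    ∃ α β γ : ℝ, 0 < α ∧
      GammaAbf μ c α β γ =
        {v : EuclideanSpace ℝ (Fin 2) |
          (WithLp.equiv 2 (Fin 2 → ℝ)) v ⬝ᵥ A.mulVec ((WithLp.equiv 2 (Fin 2 → ℝ)) v) = k} := by
  -- matrix entry facts
  have hb10 : A 1 0 = A 0 1 := by
    have h := congrFun (congrFun hsymm 1) 0
    simpa [Matrix.transpose_apply] using h.symm
  have ha : 0 < A 0 0 := by
    have h := hpos ![1, 0] (by
      intro h
      have := congrFun h 0
      simp at this)
    simpa [dotProduct, Matrix.mulVec, Fin.sum_univ_two] using h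
  have hdet' : A 0 0 * A 1 1 - A 0 1 * A 1 0 = 1 := by
    rw [Matrix.det_fin_two] at hdet; exact hdet
  have hAd : A 0 0 * A 1 1 = A 0 1 * A 0 1 + 1 := by
    rw [hb10] at hdet'; linarith
  set sa := Real.sqrt (A 0 0) with hsa
  have hsapos : 0 < sa := Real.sqrt_pos.mpr ha
  have hsane : sa ≠ 0 := ne_of_gt hsapos
  have hsa2 : sa ^ 2 = A 0 0 := Real.sq_sqrt ha.le
  -- parameters
  set T := c * Real.exp (μ ^ 2 * k) with hT
  have hT0 : 0 < T := by positivity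
  have hT1 : T < 1 := by
    have hμ2 : 0 < μ ^ 2 := by positivity
    have hlog : μ ^ 2 * k < Real.log (1 / c) := by
      calc μ ^ 2 * k < μ ^ 2 * ((1 / μ ^ 2) * Real.log (1 / c)) :=
            mul_lt_mul_of_pos_left hk1 hμ2
        _ = Real.log (1 / c) := by field_simp
    have hexp : Real.exp (μ ^ 2 * k) < 1 / c := by
      calc Real.exp (μ ^ 2 * k) < Real.exp (Real.log (1 / c)) := Real.exp_lt_exp.mpr hlog
        _ = 1 / c := Real.exp_log (by positivity)
    calc T < c * (1 / c) := mul_lt_mul_of_pos_left hexp hc0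
      _ = 1 := by field_simp
  refine ⟨Real.log ((1 + T) / (1 - T)), Real.log sa, A 0 1 / sa, ?_, ?_⟩
  · apply Real.log_pos
    rw [lt_div_iff₀ (by linarith)]
    linarith
  · have htanh : Real.tanh (Real.log ((1 + T) / (1 - T)) / 2) = T :=
      tanh_half_log_ratio hT0 hT1
    have hexpβ : Real.exp (Real.log sa) = sa := Real.exp_log hsapos
    have hexpnβ : Real.exp (-Real.log sa) = sa⁻¹ := by
      rw [Real.exp_neg, hexpβ]
    ext v
    have hq : (WithLp.equiv 2 (Fin 2 → ℝ)) v ⬝ᵥ A.mulVec ((WithLp.equiv 2 (Fin 2 → ℝ)) v)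
        = A 0 0 * (v 0) ^ 2 + 2 * (A 0 1) * (v 0) * (v 1) + A 1 1 * (v 1) ^ 2 := by
      simp only [dotProduct, Matrix.mulVec, Fin.sum_univ_two, WithLp.equiv_apply,
        hb10]
      ring
    set w := (WithLp.equiv 2 (Fin 2 → ℝ)).symm
      ((Rmat μ (Real.log sa) (A 0 1 / sa)).mulVec ((WithLp.equiv 2 (Fin 2 → ℝ)) v)) with hw
    have hw0 : w 0 = μ * (sa * v 0 + A 0 1 / sa * v 1) := by
      simp [hw, Rmat, Matrix.mulVec, dotProduct, Fin.sum_univ_two, hexpβ, Matrix.vecHead, Matrix.vecTail]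
      ring
    have hw1 : w 1 = μ * (sa⁻¹ * v 1) := by
      simp [hw, Rmat, Matrix.mulVec, dotProduct, Fin.sum_univ_two, hexpnβ, Matrix.vecHead, Matrix.vecTail]
      ring
    have hnorm : ‖w‖ ^ 2 = w 0 ^ 2 + w 1 ^ 2 := by
      rw [EuclideanSpace.norm_eq, Real.sq_sqrt (by positivity)]
      simp [Fin.sum_univ_two, sq_abs]
    have hkey : ‖w‖ ^ 2 = μ ^ 2 *
        ((WithLp.equiv 2 (Fin 2 → ℝ)) v ⬝ᵥ A.mulVec ((WithLp.equiv 2 (Fin 2 → ℝ)) v)) := by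
      rw [hnorm, hw0, hw1, hq]
      field_simp
      linear_combination ((v 0) ^ 2 * sa ^ 2 - (v 1) ^ 2 * A 1 1) * hsa2
        - (v 1) ^ 2 * hAd
    have hμ2ne : (μ : ℝ) ^ 2 ≠ 0 := by positivity
    constructor
    · intro hmem
      have hphi : T * Real.exp (-‖w‖ ^ 2) = c := by
        simp only [GammaAbf, Set.mem_setOf_eq, phiAbf] at hmem
        rw [← hw, htanh] at hmem
        exact hmem
      have h1 : Real.exp (μ ^ 2 * k) * Real.exp (-‖w‖ ^ 2) = 1 := by
        have h2 : c * (Real.exp (μ ^ 2 * k) * Real.exp (-‖w‖ ^ 2)) = c * 1 := by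
          rw [mul_one, ← mul_assoc, ← hT]; exact hphi
        exact mul_left_cancel₀ (ne_of_gt hc0) h2
      rw [← Real.exp_add] at h1
      have h3 : μ ^ 2 * k + -‖w‖ ^ 2 = 0 := by simpa using h1
      have h4 : ‖w‖ ^ 2 = μ ^ 2 * k := by linarith
      rw [hkey] at h4
      exact mul_left_cancel₀ hμ2ne h4
    · intro hmem
      have hqk : (WithLp.equiv 2 (Fin 2 → ℝ)) v ⬝ᵥ
          A.mulVec ((WithLp.equiv 2 (Fin 2 → ℝ)) v) = k := hmem
      have hN : ‖w‖ ^ 2 = μ ^ 2 * k := by rw [hkey, hqk]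
      show phiAbf μ (Real.log ((1 + T) / (1 - T))) (Real.log sa) (A 0 1 / sa) v = c
      unfold phiAbf
      rw [← hw, htanh, hN, hT, mul_assoc, ← Real.exp_add]
      simp
end
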